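/- arXiv:1304.1188 — 5 statements merged into one kernel-verified Lean document; each statement's English description precedes it below -/
import Mathlib

section
/- Let U be a finite set of size u ≥ 1, let ε > 0, let k ≥ 0 and m ≥ 1 be integers, and let F : U^k → Set U be any function such that |F(p)| ≤ 4εu for every p ∈ U^k. Then the number of sequences s ∈ U^{k+m} for which at least 9εm of the last m coordinates land in the set determined by the first k coordinates, i.e. |{ i : k < i ≤ k+m and s_i ∈ F(s_1,…,s_k) }| ≥ 9εm, is at most e^{−2ε²m} · u^{k+m}. -/
open Finset

lemma log94_ge : (2:ℝ)/3 ≤ Real.log (9/4) := by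
  have h : Real.log (2/3) ≤ 2/3 - 1 := Real.log_le_sub_one_of_pos (by norm_num)
  have h2 : Real.log (9/4) = (-2 : ℤ) * Real.log (2/3) := by
    rw [show (9:ℝ)/4 = ((2:ℝ)/3)^(-2 : ℤ) by norm_num, Real.log_zpow]
  push_cast at h2
  linarith

lemma card_filter_fin_le (k m : ℕ) (P : Fin (k+m) → Prop) [DecidablePred P] :
    (Finset.univ.filter (fun i : Fin (k+m) => k ≤ (i : ℕ) ∧ P i)).card ≤ m := by
  rcases Nat.eq_zero_or_pos m with hm | hm
  · subst hm
    have : (Finset.univ.filter (fun i : Fin (k+0) => k ≤ (i : ℕ) ∧ P i)) = ∅ := by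
      ext i
      have := i.isLt
      simp only [mem_filter, mem_univ, true_and, Finset.notMem_empty, iff_false, not_and]
      omega
    rw [this]
    simp
  · have := Finset.card_le_card_of_injOn
      (f := fun i : Fin (k+m) => (⟨(i : ℕ) - k, by have := i.isLt; omega⟩ : Fin m))
      (s := Finset.univ.filter (fun i : Fin (k+m) => k ≤ (i : ℕ) ∧ P i))
      (t := Finset.univ) (fun a _ => Finset.mem_univ _) ?_
    · simpa using this
    · intro a ha b hb hab
      simp only [Finset.coe_filter, Set.mem_setOf_eq, mem_univ, true_and] at ha hb
      have h1 : (a : ℕ) - k = (b : ℕ) - k := congrArg Fin.val hab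
      exact Fin.ext (by omega)

/-- Chernoff–Hoeffding-type counting bound: if `F` assigns to every length-`k`
prefix a subset of `U` of size at most `4εu`, then the number of sequences
`s ∈ U^{k+m}` for which at least `9εm` of the last `m` coordinates land in the
set determined by the first `k` coordinates is at most `e^{−2ε²m} · u^{k+m}`. -/
theorem chernoff_counting_bound
    (U : Type) [Fintype U] (u : ℕ) (hu : 1 ≤ u) (hcard : Fintype.card U = u)
    (ε : ℝ) (hε : 0 < ε) (k m : ℕ) (hm : 1 ≤ m)
    (F : (Fin k → U) → Set U)
    (hF : ∀ p : Fin k → U, ((F p).ncard : ℝ) ≤ 4 * ε * u) :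
    ((Set.ncard {s : Fin (k + m) → U |
        9 * ε * m ≤
          ((Set.ncard {i : Fin (k + m) | k ≤ (i : ℕ) ∧
              s i ∈ F (fun j : Fin k => s (Fin.castAdd m j))}) : ℝ)}) : ℝ)
      ≤ Real.exp (-2 * ε ^ 2 * m) * (u : ℝ) ^ (k + m) := by
  classical
  have hm1 : (1:ℝ) ≤ (m:ℝ) := by exact_mod_cast hm
  have hu0 : (0:ℝ) < (u:ℝ) := by exact_mod_cast hu
  -- the hit-count as a Finset card
  set X : (Fin (k+m) → U) → ℕ := fun s =>
    (Finset.univ.filter (fun i : Fin (k+m) => k ≤ (i : ℕ) ∧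
      s i ∈ F (fun j : Fin k => s (Fin.castAdd m j)))).card with hXdef
  have hX : ∀ s : Fin (k+m) → U,
      Set.ncard {i : Fin (k + m) | k ≤ (i : ℕ) ∧
        s i ∈ F (fun j : Fin k => s (Fin.castAdd m j))} = X s := by
    intro s
    rw [show {i : Fin (k + m) | k ≤ (i : ℕ) ∧
        s i ∈ F (fun j : Fin k => s (Fin.castAdd m j))}
      = ↑(Finset.univ.filter (fun i : Fin (k+m) => k ≤ (i : ℕ) ∧
          s i ∈ F (fun j : Fin k => s (Fin.castAdd m j)))) from by ext i; simp,
      Set.ncard_coe_finset]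
  have hXle : ∀ s, X s ≤ m := fun s => card_filter_fin_le k m _
  set B : Finset (Fin (k+m) → U) :=
    Finset.univ.filter (fun s => 9 * ε * m ≤ (X s : ℝ)) with hBdef
  have hsetB : {s : Fin (k + m) → U |
        9 * ε * m ≤
          ((Set.ncard {i : Fin (k + m) | k ≤ (i : ℕ) ∧
              s i ∈ F (fun j : Fin k => s (Fin.castAdd m j))}) : ℝ)} = ↑B := by
    ext s
    simp [hBdef, hX s]
  rw [hsetB, Set.ncard_coe_finset]
  rcases le_or_gt ε (1/9) with hε9 | hε9
  swap
  · -- ε > 1/9 : the set is empty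
    have hBempty : B = ∅ := by
      ext s
      simp only [hBdef, mem_filter, mem_univ, true_and, Finset.notMem_empty, iff_false, not_le]
      have : (X s : ℝ) ≤ m := by exact_mod_cast hXle s
      nlinarith
    rw [hBempty]
    simp only [Finset.card_empty, Nat.cast_zero]
    positivity
  -- main case: Chernoff with λ = log (9/4)
  set L : ℝ := Real.log (9/4) with hLdef
  have hL23 : (2:ℝ)/3 ≤ L := log94_ge
  have hL0 : 0 < L := by linarith
  have hexpL : Real.exp L = 9/4 := Real.exp_log (by norm_num)
  -- Step A: card B ≤ exp (-9εmL) * Σ_s exp (L * X s)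
  have stepA : (B.card : ℝ) ≤
      Real.exp (-(9 * ε * m * L)) * ∑ s : Fin (k+m) → U, Real.exp (L * X s) := by
    have h1 : (B.card : ℝ) ≤ ∑ s ∈ B, Real.exp (L * X s - 9 * ε * m * L) := by
      rw [Finset.card_eq_sum_ones]
      push_cast
      apply Finset.sum_le_sum
      intro s hs
      simp only [hBdef, mem_filter] at hs
      have : 0 ≤ L * X s - 9 * ε * m * L := by nlinarith [hs.2]
      exact Real.one_le_exp this
    have h2 : ∑ s ∈ B, Real.exp (L * X s - 9 * ε * m * L)
        ≤ ∑ s : Fin (k+m) → U, Real.exp (L * X s - 9 * ε * m * L) :=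
      Finset.sum_le_sum_of_subset_of_nonneg (Finset.subset_univ _)
        (fun s _ _ => (Real.exp_pos _).le)
    calc (B.card : ℝ) ≤ ∑ s : Fin (k+m) → U, Real.exp (L * X s - 9 * ε * m * L) :=
          le_trans h1 h2
      _ = Real.exp (-(9 * ε * m * L)) * ∑ s : Fin (k+m) → U, Real.exp (L * X s) := by
          rw [Finset.mul_sum]
          refine Finset.sum_congr rfl fun s _ => ?_
          rw [← Real.exp_add]; ring_nf
  -- the weight function
  set w : (Fin k → U) → U → ℝ := fun p x => if x ∈ F p then (9/4 : ℝ) else 1 with hwdef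
  -- the equivalence
  set E : ((Fin k → U) × (Fin m → U)) ≃ (Fin (k+m) → U) :=
    (Equiv.sumArrowEquivProdArrow (Fin k) (Fin m) U).symm.trans
      (Equiv.arrowCongr finSumFinEquiv (Equiv.refl U)) with hEdef
  have hE1 : ∀ (p : Fin k → U) (q : Fin m → U) (j : Fin k),
      E (p, q) (Fin.castAdd m j) = p j := by
    intro p q j
    simp [hEdef, Equiv.sumArrowEquivProdArrow, Equiv.arrowCongr,
      finSumFinEquiv_symm_apply_castAdd]
  have hE2 : ∀ (p : Fin k → U) (q : Fin m → U) (j : Fin m),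
      E (p, q) (Fin.natAdd k j) = q j := by
    intro p q j
    simp [hEdef, Equiv.sumArrowEquivProdArrow, Equiv.arrowCongr,
      finSumFinEquiv_symm_apply_natAdd]
  -- X on a split sequence
  have hXE : ∀ (p : Fin k → U) (q : Fin m → U),
      X (E (p, q)) = (Finset.univ.filter (fun j : Fin m => q j ∈ F p)).card := by
    intro p q
    have hpre : (fun j : Fin k => E (p, q) (Fin.castAdd m j)) = p := funext (hE1 p q)
    rw [hXdef]
    simp only [hpre]
    have hf : ∀ i : Fin (k+m), (i : ℕ) - k < m := by
      intro i
      have := i.isLt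
      omega
    apply Finset.card_bij' (fun (i : Fin (k+m)) (_ : i ∈ Finset.univ.filter
          (fun i : Fin (k+m) => k ≤ (i : ℕ) ∧ E (p, q) i ∈ F p)) => (⟨(i : ℕ) - k, hf i⟩ : Fin m))
        (fun j _ => Fin.natAdd k j)
    · intro i hi
      simp only [mem_filter, mem_univ, true_and] at hi ⊢
      have hik : i = Fin.natAdd k (⟨(i : ℕ) - k, hf i⟩ : Fin m) := by
        apply Fin.ext
        simp only [Fin.natAdd]
        omega
      rw [← hE2 p q, ← hik]
      exact hi.2
    · intro j hj
      simp only [mem_filter, mem_univ, true_and] at hj ⊢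
      constructor
      · simp [Fin.natAdd]
      · rw [hE2 p q]
        exact hj
    · intro i hi
      simp only [mem_filter, mem_univ, true_and] at hi
      apply Fin.ext
      simp only [Fin.natAdd]
      omega
    · intro j hj
      apply Fin.ext
      simp only [Fin.natAdd]
      omega
  -- Step B: the sum factorizes
  have stepB : ∑ s : Fin (k+m) → U, Real.exp (L * X s)
      = ∑ p : Fin k → U, ∑ q : Fin m → U, ∏ j : Fin m, w p (q j) := by
    rw [← Equiv.sum_comp E (fun s => Real.exp (L * X s)), Fintype.sum_prod_type]
    refine Finset.sum_congr rfl fun p _ => Finset.sum_congr rfl fun q _ => ?_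
    rw [hXE p q, mul_comm, Real.exp_nat_mul, hexpL]
    rw [Finset.prod_ite (fun _ => (9/4:ℝ)) (fun _ => (1:ℝ)), Finset.prod_const,
      Finset.prod_const_one, mul_one]
  -- Step C+D: inner sum bound
  have hwsum : ∀ p : Fin k → U, ∑ x : U, w p x ≤ (u : ℝ) * (1 + 5 * ε) := by
    intro p
    have hFfin : F p = ↑(Finset.univ.filter (· ∈ F p)) := by ext x; simp
    have hncard : (F p).ncard = (Finset.univ.filter (· ∈ F p)).card := by
      rw [← Set.ncard_coe_finset]
      exact congrArg Set.ncard hFfin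
    set a : ℕ := (Finset.univ.filter (· ∈ F p)).card with hadef
    have hau : a ≤ u := by
      rw [← hcard, ← Finset.card_univ]; exact Finset.card_filter_le _ _
    have haε : (a : ℝ) ≤ 4 * ε * u := by rw [← hncard]; exact hF p
    have hsum : ∑ x : U, w p x = a * (9/4) + ((u : ℝ) - a) := by
      rw [hwdef]
      simp only
      rw [Finset.sum_ite, Finset.sum_const, Finset.sum_const]
      have hcompl : (Finset.univ.filter (fun x => ¬ x ∈ F p)).card = u - a := by
        have := Finset.card_filter_add_card_filter_not
          (s := (Finset.univ : Finset U)) (· ∈ F p)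
        rw [Finset.card_univ, hcard] at this
        omega
      rw [hcompl, ← hadef, nsmul_eq_mul, nsmul_eq_mul, Nat.cast_sub hau]
      ring
    rw [hsum]
    nlinarith
  have hwnonneg : ∀ p : Fin k → U, (0:ℝ) ≤ ∑ x : U, w p x := by
    intro p
    apply Finset.sum_nonneg
    intro x _
    rw [hwdef]
    simp only
    split <;> norm_num
  have stepC : ∀ p : Fin k → U,
      ∑ q : Fin m → U, ∏ j : Fin m, w p (q j) = (∑ x : U, w p x) ^ m := by
    intro p
    rw [show (∑ x : U, w p x) ^ m = ∏ _j : Fin m, ∑ x : U, w p x from by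
      rw [Finset.prod_const, Finset.card_univ, Fintype.card_fin]]
    rw [Finset.prod_univ_sum (fun _ => Finset.univ) (fun _ x => w p x)]
    rw [Fintype.piFinset_univ]
  -- combine
  have stepE : ∑ s : Fin (k+m) → U, Real.exp (L * X s)
      ≤ (u:ℝ) ^ k * ((u:ℝ) * (1 + 5 * ε)) ^ m := by
    rw [stepB]
    calc ∑ p : Fin k → U, ∑ q : Fin m → U, ∏ j : Fin m, w p (q j)
        = ∑ p : Fin k → U, (∑ x : U, w p x) ^ m := by
          exact Finset.sum_congr rfl fun p _ => stepC p
      _ ≤ ∑ _p : Fin k → U, ((u:ℝ) * (1 + 5 * ε)) ^ m := by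
          apply Finset.sum_le_sum
          intro p _
          exact pow_le_pow_left₀ (hwnonneg p) (hwsum p) m
      _ = (u:ℝ) ^ k * ((u:ℝ) * (1 + 5 * ε)) ^ m := by
          rw [Finset.sum_const, Finset.card_univ, Fintype.card_fun, hcard,
            Fintype.card_fin, nsmul_eq_mul]
          push_cast
          ring
  have key : (B.card : ℝ) ≤
      Real.exp (-(9 * ε * m * L)) * ((1 + 5 * ε) ^ m) * (u:ℝ) ^ (k + m) := by
    calc (B.card : ℝ) ≤ Real.exp (-(9 * ε * m * L)) * ∑ s : Fin (k+m) → U,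
          Real.exp (L * X s) := stepA
      _ ≤ Real.exp (-(9 * ε * m * L)) * ((u:ℝ) ^ k * ((u:ℝ) * (1 + 5 * ε)) ^ m) := by
          apply mul_le_mul_of_nonneg_left stepE (Real.exp_pos _).le
      _ = Real.exp (-(9 * ε * m * L)) * ((1 + 5 * ε) ^ m) * (u:ℝ) ^ (k + m) := by
          rw [mul_pow, pow_add]
          ring
  refine le_trans key ?_
  have hfinal : Real.exp (-(9 * ε * m * L)) * ((1 + 5 * ε) ^ m)
      ≤ Real.exp (-2 * ε ^ 2 * m) := by
    have h1 : (1 + 5 * ε) ^ m ≤ Real.exp (5 * ε) ^ m := by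
      apply pow_le_pow_left₀ (by positivity)
      linarith [Real.add_one_le_exp (5 * ε)]
    have h2 : Real.exp (5 * ε) ^ m = Real.exp (m * (5 * ε)) := (Real.exp_nat_mul _ m).symm
    calc Real.exp (-(9 * ε * m * L)) * ((1 + 5 * ε) ^ m)
        ≤ Real.exp (-(9 * ε * m * L)) * Real.exp (m * (5 * ε)) := by
          rw [← h2]
          exact mul_le_mul_of_nonneg_left h1 (Real.exp_pos _).le
      _ = Real.exp (-(9 * ε * m * L) + m * (5 * ε)) := (Real.exp_add _ _).symm
      _ ≤ Real.exp (-2 * ε ^ 2 * m) := by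
          apply Real.exp_le_exp.mpr
          nlinarith [mul_pos hε (lt_of_lt_of_le one_pos hm1)]
  calc Real.exp (-(9 * ε * m * L)) * ((1 + 5 * ε) ^ m) * (u:ℝ) ^ (k + m)
      ≤ Real.exp (-2 * ε ^ 2 * m) * (u:ℝ) ^ (k + m) := by
        apply mul_le_mul_of_nonneg_right hfinal (by positivity)
end

section
/- Let U be a finite set of size u ≥ 1, let ε > 0, let γ ≥ 2 and t ≥ 1 be integers, and set n_j = ∑_{k=1}^{j} γ^k for 0 ≤ j ≤ t and n = n_t. Partition the index set {1,…,n} into consecutive blocks C_1,…,C_t where C_j = { i : n_{j−1} < i ≤ n_j } has size γ^j. For each j ∈ {1,…,t} let F_j : U^{n_{j−1}} → Set U be any function with |F_j(p)| ≤ 4εu for every p ∈ U^{n_{j−1}}. Then for every real T ≥ 1, the number of sequences S ∈ U^n for which there exists some j ∈ {1,…,t} with γ^j ≥ T and |{ i ∈ C_j : S_i ∈ F_j(S_1,…,S_{n_{j−1}}) }| ≥ 9εγ^j is at most t · e^{−2ε²T} · u^n. -/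
open Finset in
open scoped Classical in
theorem block_chernoff
    (U : Type) [Fintype U] (u : ℕ) (hu : 1 ≤ u) (hcard : Fintype.card U = u)
    (ε : ℝ) (hε : 0 < ε) (hε9 : ε ≤ 1/9)
    (n m b mb : ℕ) (hmbeq : mb = m + b) (hmn : m ≤ n) (hmb : m + b ≤ n)
    (A : (Fin m → U) → Set U)
    (hA : ∀ p, ((A p).ncard : ℝ) ≤ 4 * ε * u) :
    ((Finset.univ.filter (fun S : Fin n → U =>
        9 * ε * b ≤ ((Finset.univ.filter (fun i : Fin n =>
          m ≤ i.1 ∧ i.1 < mb ∧ S i ∈ A (fun a => S (Fin.castLE hmn a)))).card : ℝ))).card : ℝ)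
      ≤ Real.exp (-2 * ε ^ 2 * b) * (u:ℝ) ^ n := by
  classical
  subst hmbeq
  set k := n - m with hk
  have hnk : n = m + k := by omega
  have hbk : b ≤ k := by omega
  -- the equivalence
  let e : Fin m ⊕ Fin k ≃ Fin n := finSumFinEquiv.trans (finCongr hnk.symm)
  let E : ((Fin m → U) × (Fin k → U)) ≃ (Fin n → U) :=
    (Equiv.sumArrowEquivProdArrow (Fin m) (Fin k) U).symm.trans
      (Equiv.arrowCongr e (Equiv.refl U))
  have hEl : ∀ (p : Fin m → U) (q : Fin k → U) (a : Fin m), E (p, q) (e (Sum.inl a)) = p a := by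
    intro p q a
    simp [E, Equiv.arrowCongr]
  have hEr : ∀ (p : Fin m → U) (q : Fin k → U) (i : Fin k), E (p, q) (e (Sum.inr i)) = q i := by
    intro p q i
    simp [E, Equiv.arrowCongr]
  have hel : ∀ a : Fin m, (e (Sum.inl a) : ℕ) = (a : ℕ) := by
    intro a; simp [e]
  have her : ∀ i : Fin k, (e (Sum.inr i) : ℕ) = m + (i : ℕ) := by
    intro i; simp [e]
  have hEpre : ∀ (p : Fin m → U) (q : Fin k → U) (a : Fin m),
      E (p, q) (Fin.castLE hmn a) = p a := by
    intro p q a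
    have : Fin.castLE hmn a = e (Sum.inl a) := by
      apply Fin.ext; simp [hel a]
    rw [this, hEl]
  -- the count function
  set H : (Fin n → U) → ℕ := fun S => (Finset.univ.filter (fun i : Fin n =>
      m ≤ i.1 ∧ i.1 < m + b ∧ S i ∈ A (fun a => S (Fin.castLE hmn a)))).card with hH
  -- weight: 2 ^ H S as product
  have hw : ∀ S : Fin n → U, (2:ℝ) ^ (H S) = ∏ i : Fin n,
      (if m ≤ i.1 ∧ i.1 < m + b ∧ S i ∈ A (fun a => S (Fin.castLE hmn a)) then (2:ℝ) else 1) := by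
    intro S
    rw [Finset.prod_ite, Finset.prod_const, Finset.prod_const_one, mul_one, hH]
  -- Step B : total weight bound
  have hZ : ∑ S : Fin n → U, (2:ℝ) ^ (H S) ≤ (1 + 4*ε) ^ b * (u:ℝ) ^ n := by
    have h1 : ∑ S : Fin n → U, (2:ℝ) ^ (H S)
        = ∑ pq : (Fin m → U) × (Fin k → U), (2:ℝ) ^ (H (E pq)) :=
      (Equiv.sum_comp E (fun S => (2:ℝ) ^ (H S))).symm
    rw [h1, Fintype.sum_prod_type]
    have hcardA : ∀ p : Fin m → U,
        ((Finset.univ.filter (fun x : U => x ∈ A p)).card : ℝ) ≤ 4 * ε * u := by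
      intro p
      have h2 : Finset.univ.filter (fun x : U => x ∈ A p) = (A p).toFinset := by
        ext x; simp
      rw [h2, ← Set.ncard_eq_toFinset_card']
      exact hA p
    have key : ∀ p : Fin m → U, ∑ q : Fin k → U, (2:ℝ) ^ (H (E (p, q)))
        ≤ ((1 + 4*ε) * u) ^ b * (u:ℝ) ^ (k - b) := by
      intro p
      have hfix : ∀ q : Fin k → U, (2:ℝ) ^ (H (E (p, q)))
          = ∏ i : Fin k, (if i.1 < b ∧ q i ∈ A p then (2:ℝ) else 1) := by
        intro q
        rw [hw, ← Equiv.prod_comp e, Fintype.prod_sum_type]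
        have hpre : (fun a => E (p, q) (Fin.castLE hmn a)) = p := by
          funext a; exact hEpre p q a
        have l1 : ∀ a : Fin m,
            (if m ≤ (e (Sum.inl a)).1 ∧ (e (Sum.inl a)).1 < m + b ∧
              E (p, q) (e (Sum.inl a)) ∈ A (fun a' => E (p, q) (Fin.castLE hmn a'))
              then (2:ℝ) else 1) = 1 := by
          intro a
          rw [if_neg]
          rw [hel a]
          intro hcon
          omega
        have l2 : ∀ i : Fin k,
            (if m ≤ (e (Sum.inr i)).1 ∧ (e (Sum.inr i)).1 < m + b ∧
              E (p, q) (e (Sum.inr i)) ∈ A (fun a' => E (p, q) (Fin.castLE hmn a'))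
              then (2:ℝ) else 1) = (if i.1 < b ∧ q i ∈ A p then (2:ℝ) else 1) := by
          intro i
          rw [hpre, hEr, her]
          congr 1
          simp only [eq_iff_iff]
          constructor
          · rintro ⟨-, h2, h3⟩; exact ⟨by omega, h3⟩
          · rintro ⟨h1', h3⟩; exact ⟨by omega, by omega, h3⟩
        rw [Finset.prod_congr rfl (fun a _ => l1 a), Finset.prod_congr rfl (fun i _ => l2 i),
          Finset.prod_const_one, one_mul]
      have hswap : ∑ q : Fin k → U, ∏ i : Fin k, (if i.1 < b ∧ q i ∈ A p then (2:ℝ) else 1)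
          = ∏ i : Fin k, ∑ x : U, (if i.1 < b ∧ x ∈ A p then (2:ℝ) else 1) := by
        have h3 := Finset.prod_univ_sum (fun _ : Fin k => (Finset.univ : Finset U))
          (fun (i : Fin k) (x : U) => if i.1 < b ∧ x ∈ A p then (2:ℝ) else 1)
        rw [Fintype.piFinset_univ] at h3
        exact h3.symm
      have hxsum : ∀ i : Fin k, ∑ x : U, (if i.1 < b ∧ x ∈ A p then (2:ℝ) else 1)
          ≤ (if i.1 < b then (1 + 4*ε) * u else (u:ℝ)) := by
        intro i
        by_cases hib : i.1 < b
        · simp only [hib, true_and, if_true]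
          rw [Finset.sum_ite, Finset.sum_const, Finset.sum_const, nsmul_eq_mul, nsmul_eq_mul]
          have hsplit : ((Finset.univ.filter (fun x : U => x ∈ A p)).card : ℝ)
              + ((Finset.univ.filter (fun x : U => ¬ x ∈ A p)).card : ℝ) = u := by
            rw [← Nat.cast_add, Finset.card_filter_add_card_filter_not,
              Finset.card_univ, hcard]
          have h4 := hcardA p
          linarith
        · simp only [hib, false_and, if_false, Finset.sum_const, Finset.card_univ, hcard,
            nsmul_eq_mul, mul_one, le_refl]
      calc ∑ q : Fin k → U, (2:ℝ) ^ (H (E (p, q)))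
          = ∏ i : Fin k, ∑ x : U, (if i.1 < b ∧ x ∈ A p then (2:ℝ) else 1) := by
            rw [Finset.sum_congr rfl (fun q _ => hfix q), hswap]
        _ ≤ ∏ i : Fin k, (if i.1 < b then (1 + 4*ε) * u else (u:ℝ)) := by
            apply Finset.prod_le_prod
            · intro i _
              apply Finset.sum_nonneg
              intro x _
              split <;> norm_num
            · intro i _; exact hxsum i
        _ = ((1 + 4*ε) * u) ^ b * (u:ℝ) ^ (k - b) := by
            rw [Finset.prod_ite, Finset.prod_const, Finset.prod_const]
            have hc1 : (Finset.univ.filter (fun i : Fin k => i.1 < b)).card = b := by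
              have h5 : (Finset.univ.filter (fun i : Fin k => i.1 < b)).card
                  = (Finset.range b).card := by
                apply Finset.card_nbij (fun i => i.1) (fun i hi => by
                  simp only [Finset.mem_coe, Finset.mem_filter] at hi
                  exact Finset.mem_range.mpr hi.2)
                · intro x hx y hy hxy; exact Fin.ext hxy
                · intro x hx
                  simp only [Finset.coe_range, Set.mem_Iio] at hx
                  exact ⟨⟨x, by omega⟩, by simp [hx], rfl⟩
              rw [h5, Finset.card_range]
            have hc2 : (Finset.univ.filter (fun i : Fin k => ¬ i.1 < b)).card = k - b := by
              have h6 := Finset.card_filter_add_card_filter_not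
                (s := (Finset.univ : Finset (Fin k))) (p := fun i : Fin k => i.1 < b)
              rw [Finset.card_univ, Fintype.card_fin, hc1] at h6
              omega
            rw [hc1, hc2]
    calc ∑ p : Fin m → U, ∑ q : Fin k → U, (2:ℝ) ^ (H (E (p, q)))
        ≤ ∑ _p : Fin m → U, ((1 + 4*ε) * u) ^ b * (u:ℝ) ^ (k - b) :=
          Finset.sum_le_sum (fun p _ => key p)
      _ = (u:ℝ) ^ m * (((1 + 4*ε) * u) ^ b * (u:ℝ) ^ (k - b)) := by
          rw [Finset.sum_const, Finset.card_univ, nsmul_eq_mul]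
          congr 1
          rw [Fintype.card_fun, hcard, Fintype.card_fin, Nat.cast_pow]
      _ = (1 + 4*ε) ^ b * ((u:ℝ) ^ m * ((u:ℝ) ^ b * (u:ℝ) ^ (k - b))) := by
          rw [mul_pow]; ring
      _ = (1 + 4*ε) ^ b * (u:ℝ) ^ n := by
          rw [← pow_add, ← pow_add]
          congr 2
          omega
  -- Step A : bad count vs weight
  have h2 : ((Finset.univ.filter (fun S : Fin n → U => 9 * ε * b ≤ ((H S : ℕ) : ℝ))).card : ℝ)
      * (2:ℝ) ^ (9 * ε * (b:ℝ)) ≤ ∑ S : Fin n → U, (2:ℝ) ^ (H S) := by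
    rw [← nsmul_eq_mul]
    calc (Finset.univ.filter (fun S : Fin n → U => 9 * ε * b ≤ ((H S : ℕ) : ℝ))).card
          • (2:ℝ) ^ (9 * ε * (b:ℝ))
        ≤ ∑ S ∈ Finset.univ.filter (fun S : Fin n → U => 9 * ε * b ≤ ((H S : ℕ) : ℝ)),
            (2:ℝ) ^ (H S) := by
          apply Finset.card_nsmul_le_sum
          intro S hS
          rw [Finset.mem_filter] at hS
          have hrw : (2:ℝ) ^ ((H S : ℕ) : ℝ) = (2:ℝ) ^ (H S) := Real.rpow_natCast 2 (H S)
          rw [← hrw]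
          exact (Real.rpow_le_rpow_left_iff (by norm_num)).mpr hS.2
      _ ≤ ∑ S : Fin n → U, (2:ℝ) ^ (H S) :=
          Finset.sum_le_sum_of_subset_of_nonneg (Finset.filter_subset _ _)
            (fun S _ _ => by positivity)
  have hb0 : (0:ℝ) ≤ (b:ℝ) := Nat.cast_nonneg b
  have hexp : (1 + 4*ε) ^ b ≤ Real.exp (-2 * ε ^ 2 * b) * (2:ℝ) ^ (9 * ε * (b:ℝ)) := by
    have l1 : (1 + 4*ε) ^ b ≤ Real.exp (4 * ε * b) := by
      calc (1 + 4*ε) ^ b ≤ (Real.exp (4*ε)) ^ b := by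
            apply pow_le_pow_left₀ (by positivity)
            have := Real.add_one_le_exp (4*ε)
            linarith
        _ = Real.exp (4 * ε * b) := by
            rw [← Real.exp_nat_mul]
            ring_nf
    have l2 : (2:ℝ) ^ (9 * ε * (b:ℝ)) = Real.exp (Real.log 2 * (9 * ε * b)) :=
      Real.rpow_def_of_pos (by norm_num) _
    rw [l2, ← Real.exp_add]
    refine l1.trans (Real.exp_le_exp.mpr ?_)
    have hlog := Real.log_two_gt_d9
    nlinarith [mul_nonneg (le_of_lt hε) hb0, sq_nonneg ε]
  have h2pos : (0:ℝ) < (2:ℝ) ^ (9 * ε * (b:ℝ)) := Real.rpow_pos_of_pos (by norm_num) _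
  show ((Finset.univ.filter (fun S : Fin n → U => 9 * ε * b ≤ ((H S : ℕ) : ℝ))).card : ℝ)
      ≤ Real.exp (-2 * ε ^ 2 * b) * (u:ℝ) ^ n
  rw [← mul_le_mul_iff_of_pos_right h2pos]
  calc ((Finset.univ.filter (fun S : Fin n → U => 9 * ε * b ≤ ((H S : ℕ) : ℝ))).card : ℝ)
        * (2:ℝ) ^ (9 * ε * (b:ℝ))
      ≤ ∑ S : Fin n → U, (2:ℝ) ^ (H S) := h2
    _ ≤ (1 + 4*ε) ^ b * (u:ℝ) ^ n := hZ
    _ ≤ (Real.exp (-2 * ε ^ 2 * b) * (2:ℝ) ^ (9 * ε * (b:ℝ))) * (u:ℝ) ^ n :=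
        mul_le_mul_of_nonneg_right hexp (by positivity)
    _ = Real.exp (-2 * ε ^ 2 * b) * (u:ℝ) ^ n * (2:ℝ) ^ (9 * ε * (b:ℝ)) := by ring

/-- Block version via a per-block Chernoff bound and a union bound: for blocks
`C_j` of size `γ^j` and prefix-dependent adversarial sets `F_j` of density at
most `4ε`, the number of sequences `S ∈ U^n` having some block `j` with
`γ^j ≥ T` in which at least `9εγ^j` elements land in `F_j(prefix)` is at most
`t · e^{−2ε²T} · u^n`. -/
theorem chernoff_union_blocks
    (U : Type) [Fintype U] (u : ℕ) (hu : 1 ≤ u) (hcard : Fintype.card U = u)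
    (ε : ℝ) (hε : 0 < ε) (γ t : ℕ) (hγ : 2 ≤ γ) (ht : 1 ≤ t)
    (nseq : ℕ → ℕ) (hnseq : ∀ j : ℕ, nseq j = ∑ k ∈ Finset.Icc 1 j, γ ^ k)
    (n : ℕ) (hn : n = nseq t)
    (F : ∀ j : ℕ, (Fin (nseq (j - 1)) → U) → Set U)
    (hF : ∀ j : ℕ, 1 ≤ j → j ≤ t → ∀ p : Fin (nseq (j - 1)) → U,
      ((F j p).ncard : ℝ) ≤ 4 * ε * u)
    (T : ℝ) (hT : 1 ≤ T) :
    ((Set.ncard {S : Fin n → U | ∃ j : ℕ, ∃ _hj1 : 1 ≤ j, ∃ hj2 : j ≤ t,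
        T ≤ (γ : ℝ) ^ j ∧
        9 * ε * (γ : ℝ) ^ j ≤
          ((Set.ncard {i : Fin n | nseq (j - 1) ≤ (i : ℕ) ∧ (i : ℕ) < nseq j ∧
              S i ∈ F j (fun a : Fin (nseq (j - 1)) => S (Fin.castLE
                (show nseq (j - 1) ≤ n by
                  subst hn
                  rw [hnseq (j - 1), hnseq t]
                  exact Finset.sum_le_sum_of_subset
                    (Finset.Icc_subset_Icc_right (by omega))) a))}) : ℝ)}) : ℝ)
      ≤ (t : ℝ) * Real.exp (-2 * ε ^ 2 * T) * (u : ℝ) ^ n := by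
  classical
  have hsetOf : ∀ (P : (Fin n → U) → Prop),
      {S : Fin n → U | P S}.ncard = (Finset.univ.filter P).card := fun P => by
    rw [Set.ncard_eq_toFinset_card', Set.toFinset_setOf]
  have hsetOf' : ∀ (P : Fin n → Prop),
      {i : Fin n | P i}.ncard = (Finset.univ.filter P).card := fun P => by
    rw [Set.ncard_eq_toFinset_card', Set.toFinset_setOf]
  simp only [hsetOf, hsetOf']
  have hpre2 : ∀ j : ℕ, j ≤ t → nseq (j - 1) ≤ n := by
    intro j hj2
    subst hn
    rw [hnseq (j - 1), hnseq t]
    exact Finset.sum_le_sum_of_subset (Finset.Icc_subset_Icc_right (by omega))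
  have hjeq : ∀ j : ℕ, 1 ≤ j → nseq j = nseq (j - 1) + γ ^ j := by
    intro j hj1
    rw [hnseq j, hnseq (j - 1)]
    have h7 : j - 1 + 1 = j := by omega
    calc ∑ k ∈ Finset.Icc 1 j, γ ^ k = ∑ k ∈ Finset.Icc 1 (j - 1 + 1), γ ^ k := by rw [h7]
      _ = ∑ k ∈ Finset.Icc 1 (j - 1), γ ^ k + γ ^ (j - 1 + 1) :=
          Finset.sum_Icc_succ_top (by omega) _
      _ = ∑ k ∈ Finset.Icc 1 (j - 1), γ ^ k + γ ^ j := by rw [h7]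
  have hmbn : ∀ j : ℕ, 1 ≤ j → j ≤ t → nseq (j - 1) + γ ^ j ≤ n := by
    intro j hj1 hj2
    rw [← hjeq j hj1]
    subst hn
    rw [hnseq j, hnseq t]
    exact Finset.sum_le_sum_of_subset (Finset.Icc_subset_Icc_right hj2)
  set Qp : ℕ → (Fin n → U) → Prop := fun j S => ∃ hj2 : j ≤ t,
      T ≤ (γ : ℝ) ^ j ∧ 9 * ε * (γ : ℝ) ^ j ≤
        ((Finset.univ.filter (fun i : Fin n => nseq (j - 1) ≤ (i : ℕ) ∧ (i : ℕ) < nseq j ∧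
          S i ∈ F j (fun a : Fin (nseq (j - 1)) =>
            S (Fin.castLE (hpre2 j hj2) a)))).card : ℝ) with hQp
  have hcnt_le : ∀ j : ℕ, 1 ≤ j → ∀ R : Fin n → Prop,
      (Finset.univ.filter (fun i : Fin n =>
        nseq (j - 1) ≤ (i : ℕ) ∧ (i : ℕ) < nseq j ∧ R i)).card ≤ γ ^ j := by
    intro j hj1 R
    calc (Finset.univ.filter (fun i : Fin n =>
            nseq (j - 1) ≤ (i : ℕ) ∧ (i : ℕ) < nseq j ∧ R i)).card
        ≤ (Finset.Ico (nseq (j - 1)) (nseq j)).card := by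
          refine Finset.card_le_card_of_injOn (fun i => (i : ℕ)) ?_ ?_
          · intro i hi
            simp only [Finset.mem_coe, Finset.mem_filter] at hi
            exact Finset.mem_Ico.mpr ⟨hi.2.1, hi.2.2.1⟩
          · intro x _ y _ hxy
            exact Fin.ext hxy
      _ = γ ^ j := by rw [Nat.card_Ico, hjeq j hj1]; omega
  -- per-block bound
  have perj : ∀ j ∈ Finset.Icc 1 t, ((Finset.univ.filter (Qp j)).card : ℝ)
      ≤ Real.exp (-2 * ε ^ 2 * T) * (u : ℝ) ^ n := by
    intro j hj
    rw [Finset.mem_Icc] at hj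
    obtain ⟨hj1, hj2⟩ := hj
    by_cases hTj : T ≤ (γ : ℝ) ^ j
    · by_cases hε9 : ε ≤ 1 / 9
      · -- main Chernoff case
        have hmn' := hpre2 j hj2
        have hmain := block_chernoff U u hu hcard ε hε hε9 n (nseq (j - 1)) (γ ^ j)
          (nseq j) (hjeq j hj1) hmn' (hmbn j hj1 hj2) (F j) (hF j hj1 hj2)
        calc ((Finset.univ.filter (Qp j)).card : ℝ)
            ≤ ((Finset.univ.filter (fun S : Fin n → U =>
                9 * ε * ((γ ^ j : ℕ) : ℝ) ≤ ((Finset.univ.filter (fun i : Fin n =>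
                  nseq (j - 1) ≤ (i : ℕ) ∧ (i : ℕ) < nseq j ∧
                  S i ∈ F j (fun a : Fin (nseq (j - 1)) =>
                    S (Fin.castLE hmn' a)))).card : ℝ))).card : ℝ) := by
              apply Nat.cast_le.mpr
              apply Finset.card_le_card
              intro S hS
              simp only [Finset.mem_filter, Finset.mem_univ, true_and, hQp] at hS ⊢
              obtain ⟨hj2', hT', hbj⟩ := hS
              push_cast
              exact hbj
          _ ≤ Real.exp (-2 * ε ^ 2 * ((γ ^ j : ℕ) : ℝ)) * (u : ℝ) ^ n := hmain
          _ ≤ Real.exp (-2 * ε ^ 2 * T) * (u : ℝ) ^ n := by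
              apply mul_le_mul_of_nonneg_right _ (by positivity)
              apply Real.exp_le_exp.mpr
              push_cast
              nlinarith [sq_nonneg ε]
      · -- ε > 1/9 : the bad set is empty
        have hempty : Finset.univ.filter (Qp j) = ∅ := by
          rw [Finset.filter_eq_empty_iff]
          intro S _
          simp only [hQp]
          rintro ⟨hj2', hT', hbj⟩
          have h8 := hcnt_le j hj1 (fun i => S i ∈ F j (fun a : Fin (nseq (j - 1)) =>
            S (Fin.castLE (hpre2 j hj2') a)))
          have h9 : ((Finset.univ.filter (fun i : Fin n =>
              nseq (j - 1) ≤ (i : ℕ) ∧ (i : ℕ) < nseq j ∧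
              S i ∈ F j (fun a : Fin (nseq (j - 1)) =>
                S (Fin.castLE (hpre2 j hj2') a)))).card : ℝ) ≤ ((γ ^ j : ℕ) : ℝ) :=
            Nat.cast_le.mpr h8
          have h10 := le_trans hbj h9
          have hγpos : (0 : ℝ) < (γ : ℝ) ^ j := by positivity
          push_cast at h10
          nlinarith
        rw [hempty]
        simp only [Finset.card_empty, Nat.cast_zero]
        positivity
    · -- T > γ^j : the bad set is empty
      have hempty : Finset.univ.filter (Qp j) = ∅ := by
        rw [Finset.filter_eq_empty_iff]
        intro S _
        simp only [hQp]
        rintro ⟨hj2', hT', hbj⟩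
        exact hTj hT'
      rw [hempty]
      simp only [Finset.card_empty, Nat.cast_zero]
      positivity
  -- union bound
  have step1 : ((Finset.univ.filter (fun S : Fin n → U =>
        ∃ j : ℕ, ∃ _hj1 : 1 ≤ j, Qp j S)).card : ℝ)
      ≤ ∑ j ∈ Finset.Icc 1 t, ((Finset.univ.filter (Qp j)).card : ℝ) := by
    have hsub : Finset.univ.filter (fun S : Fin n → U => ∃ j : ℕ, ∃ _hj1 : 1 ≤ j, Qp j S)
        ⊆ (Finset.Icc 1 t).biUnion (fun j => Finset.univ.filter (Qp j)) := by
      intro S hS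
      simp only [Finset.mem_filter, Finset.mem_univ, true_and, Finset.mem_biUnion,
        Finset.mem_Icc] at hS ⊢
      obtain ⟨j, hj1, hQ⟩ := hS
      have hQ2 := hQ
      simp only [hQp] at hQ2
      obtain ⟨hj2, -, -⟩ := hQ2
      exact ⟨j, ⟨hj1, hj2⟩, hQ⟩
    calc ((Finset.univ.filter (fun S : Fin n → U =>
            ∃ j : ℕ, ∃ _hj1 : 1 ≤ j, Qp j S)).card : ℝ)
        ≤ (((Finset.Icc 1 t).biUnion (fun j => Finset.univ.filter (Qp j))).card : ℝ) :=
          Nat.cast_le.mpr (Finset.card_le_card hsub)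
      _ ≤ ∑ j ∈ Finset.Icc 1 t, ((Finset.univ.filter (Qp j)).card : ℝ) := by
          exact_mod_cast Finset.card_biUnion_le
  have step2 : ∑ j ∈ Finset.Icc 1 t, ((Finset.univ.filter (Qp j)).card : ℝ)
      ≤ (t : ℝ) * Real.exp (-2 * ε ^ 2 * T) * (u : ℝ) ^ n := by
    calc ∑ j ∈ Finset.Icc 1 t, ((Finset.univ.filter (Qp j)).card : ℝ)
        ≤ ∑ _j ∈ Finset.Icc 1 t, Real.exp (-2 * ε ^ 2 * T) * (u : ℝ) ^ n :=
          Finset.sum_le_sum perj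
      _ = (t : ℝ) * Real.exp (-2 * ε ^ 2 * T) * (u : ℝ) ^ n := by
          rw [Finset.sum_const, Nat.card_Icc]
          have h11 : t + 1 - 1 = t := by omega
          rw [h11, nsmul_eq_mul]
          ring
  refine le_trans (le_of_eq ?_) (le_trans step1 step2)
  congr 1
  congr 1
  apply Finset.filter_congr
  intro S _
  simp only [hQp, eq_iff_iff]
  constructor
  · rintro ⟨j, hj1, hj2, hT', hb⟩
    refine ⟨j, hj1, hj2, hT', ?_⟩
    convert hb using 4
  · rintro ⟨j, hj1, hj2, hT', hb⟩
    refine ⟨j, hj1, hj2, hT', ?_⟩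
    convert hb using 4
end

section
/- Let r and i be integers with 1 ≤ r < i and i − r ≤ 2^{r+1}. Then ∑_{j=1}^{i−r} 2^{j−1} · 2^{i−j−r} + ∑_{j=i−r+1}^{i} 2^{j−1} ≤ 2^{i+2}. -/
lemma geom_icc (i : ℕ) : (∑ j ∈ Finset.Icc 1 i, 2 ^ (j - 1)) = 2 ^ i - 1 := by
  induction i with
  | zero => simp
  | succ n ih =>
    rw [Finset.sum_Icc_succ_top (by omega), ih]
    have : 1 ≤ 2 ^ n := Nat.one_le_two_pow
    simp [pow_succ]; omega

/-- Load bound for the constant-time construction: if `1 ≤ r < i` and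
`i − r ≤ 2^{r+1}`, then
`∑_{j=1}^{i−r} 2^{j−1}·2^{i−j−r} + ∑_{j=i−r+1}^{i} 2^{j−1} ≤ 2^{i+2}`. -/
theorem dictionary_load_bound
    (r i : ℕ) (hr : 1 ≤ r) (hri : r < i) (h : i - r ≤ 2 ^ (r + 1)) :
    (∑ j ∈ Finset.Icc 1 (i - r), 2 ^ (j - 1) * 2 ^ (i - j - r)) +
      (∑ j ∈ Finset.Icc (i - r + 1) i, 2 ^ (j - 1)) ≤ 2 ^ (i + 2) := by
  have h1 : (∑ j ∈ Finset.Icc 1 (i - r), 2 ^ (j - 1) * 2 ^ (i - j - r))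
      = (i - r) * 2 ^ (i - r - 1) := by
    have hterm : ∀ j ∈ Finset.Icc 1 (i - r),
        2 ^ (j - 1) * 2 ^ (i - j - r) = 2 ^ (i - r - 1) := by
      intro j hj
      simp only [Finset.mem_Icc] at hj
      rw [← pow_add]
      have he : j - 1 + (i - j - r) = i - r - 1 := by omega
      rw [he]
    rw [Finset.sum_congr rfl hterm, Finset.sum_const, smul_eq_mul, Nat.card_Icc]
    simp
  have h2 : (∑ j ∈ Finset.Icc (i - r + 1) i, 2 ^ (j - 1))
      ≤ ∑ j ∈ Finset.Icc 1 i, 2 ^ (j - 1) := by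
    apply Finset.sum_le_sum_of_subset
    apply Finset.Icc_subset_Icc_left
    omega
  have h3 := geom_icc i
  have hfst : (i - r) * 2 ^ (i - r - 1) ≤ 2 ^ i := by
    calc (i - r) * 2 ^ (i - r - 1) ≤ 2 ^ (r + 1) * 2 ^ (i - r - 1) :=
          Nat.mul_le_mul_right _ h
      _ = 2 ^ i := by rw [← pow_add]; congr 1; omega
  have hbig : (2:ℕ) ^ (i + 2) = 4 * 2 ^ i := by ring
  omega
end

section
/- Let U be a type, let ℓ ≥ 1 be an integer, let Ω be a finite nonempty set, and let h : Ω → U → Fin(2^ℓ) be a pairwise independent hash family, meaning that for all distinct x, y ∈ U and all a, b ∈ Fin(2^ℓ), the number of ω ∈ Ω with h(ω)(x) = a and h(ω)(y) = b equals |Ω| / 2^{2ℓ}. For an integer 1 ≤ t ≤ ℓ define trunc_t : Fin(2^ℓ) → ℕ by trunc_t(a) = ⌊a / 2^{ℓ−t}⌋ (the t most significant bits of a). Let x, x_1, …, x_m ∈ U be such that x ∉ {x_1, …, x_m}, let t_1, …, t_m be integers with 1 ≤ t_j ≤ ℓ. Then the fraction of seeds ω ∈ Ω for which there exists some j ∈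 {1,…,m} with trunc_{t_j}(h(ω)(x)) = trunc_{t_j}(h(ω)(x_j)) is at most ∑_{j=1}^{m} 2^{−t_j}. -/
lemma fiber_count (ℓ e : ℕ) (c : ℕ) (hc : (c+1) * 2^e ≤ 2^ℓ) :
    (Finset.univ.filter (fun b : Fin (2^ℓ) => (b : ℕ) / 2^e = c)).card = 2^e := by
  have hpos : 0 < 2^e := Nat.pow_pos (by norm_num)
  have hc' : c * 2^e + 2^e ≤ 2^ℓ := by
    have : (c+1) * 2^e = c * 2^e + 2^e := by ring
    omega
  have key : (Finset.univ.filter (fun b : Fin (2^ℓ) => (b : ℕ) / 2^e = c)).card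
      = (Finset.Ico (c * 2^e) (c * 2^e + 2^e)).card := by
    refine Finset.card_bij (fun (b : Fin (2^ℓ)) _ => (b : ℕ)) ?_ ?_ ?_
    · intro b hb
      simp only [Finset.mem_filter, Finset.mem_univ, true_and] at hb
      simp only [Finset.mem_Ico]
      refine ⟨?_, ?_⟩
      · rw [← hb]; exact Nat.div_mul_le_self _ _
      · rw [← hb]; exact Nat.lt_div_mul_add hpos
    · intro a _ b _ hab
      exact Fin.ext hab
    · intro n hn
      simp only [Finset.mem_Ico] at hn
      have hlt : n < 2^ℓ := by omega
      refine ⟨⟨n, hlt⟩, ?_, rfl⟩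
      simp only [Finset.mem_filter, Finset.mem_univ, true_and]
      exact Nat.div_eq_of_lt_le hn.1 (by simpa [add_mul] using hn.2)
  rw [key, Nat.card_Ico]; omega

lemma pair_count (ℓ e : ℕ) (he : e ≤ ℓ) :
    ((Finset.univ : Finset (Fin (2^ℓ) × Fin (2^ℓ))).filter
      (fun p => (p.1 : ℕ) / 2^e = (p.2 : ℕ) / 2^e)).card = 2^ℓ * 2^e := by
  set T := (Finset.univ : Finset (Fin (2^ℓ) × Fin (2^ℓ))).filter
      (fun p => (p.1 : ℕ) / 2^e = (p.2 : ℕ) / 2^e) with hT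
  have hbound : ∀ a : Fin (2^ℓ), ((a : ℕ) / 2^e + 1) * 2^e ≤ 2^ℓ := by
    intro a
    have hpos : 0 < 2^e := Nat.pow_pos (by norm_num)
    have hdiv : (a : ℕ) / 2^e < 2^(ℓ - e) := by
      rw [Nat.div_lt_iff_lt_mul hpos, ← pow_add]
      have : ℓ - e + e = ℓ := by omega
      rw [this]; exact a.isLt
    calc ((a : ℕ) / 2^e + 1) * 2^e ≤ 2^(ℓ - e) * 2^e :=
          Nat.mul_le_mul_right _ (by omega)
      _ = 2^ℓ := by rw [← pow_add]; congr 1; omega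
  have h1 : T.card = ∑ a : Fin (2^ℓ),
      (T.filter (fun p => p.1 = a)).card :=
    Finset.card_eq_sum_card_fiberwise (fun p _ => Finset.mem_univ p.1)
  rw [h1]
  have h2 : ∀ a : Fin (2^ℓ), (T.filter (fun p => p.1 = a)).card = 2^e := by
    intro a
    have : T.filter (fun p => p.1 = a)
        = {a} ×ˢ (Finset.univ.filter (fun b : Fin (2^ℓ) => (b : ℕ) / 2^e = (a : ℕ) / 2^e)) := by
      ext p
      simp only [hT, Finset.mem_filter, Finset.mem_univ, true_and, Finset.mem_product,
        Finset.mem_singleton]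
      constructor
      · rintro ⟨hpe, rfl⟩; exact ⟨rfl, hpe.symm⟩
      · rintro ⟨h1', h2'⟩; exact ⟨by rw [h1', h2'], h1'⟩
    rw [this, Finset.card_product, Finset.card_singleton, one_mul]
    exact fiber_count ℓ e _ (hbound a)
  simp only [h2, Finset.sum_const, Finset.card_univ, Fintype.card_fin, smul_eq_mul]



/-- Pairwise independence plus a union bound: the fraction of seeds for which
the truncated (to the `t_j` most significant bits) hash of a fresh element `x`
collides with the correspondingly truncated hash of some stored element `x_j`
is at most `∑_j 2^{−t_j}`. -/
theorem truncated_signature_collision_bound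
    (U : Type) (ℓ : ℕ) (hℓ : 1 ≤ ℓ)
    (Ω : Type) [Fintype Ω] [Nonempty Ω]
    (h : Ω → U → Fin (2 ^ ℓ))
    (hpi : ∀ x y : U, x ≠ y → ∀ a b : Fin (2 ^ ℓ),
      ((Finset.univ.filter (fun ω : Ω => h ω x = a ∧ h ω y = b)).card : ℝ)
        = (Fintype.card Ω : ℝ) / 2 ^ (2 * ℓ))
    (m : ℕ) (x : U) (xs : Fin m → U) (hx : ∀ j : Fin m, x ≠ xs j)
    (t : Fin m → ℕ) (ht : ∀ j : Fin m, 1 ≤ t j ∧ t j ≤ ℓ) :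
    ((Finset.univ.filter (fun ω : Ω => ∃ j : Fin m,
        (h ω x : ℕ) / 2 ^ (ℓ - t j) = (h ω (xs j) : ℕ) / 2 ^ (ℓ - t j))).card : ℝ)
      / (Fintype.card Ω : ℝ)
      ≤ ∑ j : Fin m, (1 : ℝ) / 2 ^ (t j) := by
  classical
  set N : ℝ := (Fintype.card Ω : ℝ) with hN
  have hNpos : (0 : ℝ) < N := by
    simpa [hN] using (Nat.cast_pos (α := ℝ)).mpr (Fintype.card_pos (α := Ω))
  -- per-j event
  set P : Fin m → Ω → Prop := fun j ω =>
    (h ω x : ℕ) / 2 ^ (ℓ - t j) = (h ω (xs j) : ℕ) / 2 ^ (ℓ - t j) with hP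
  -- step 3: per-j count
  have key : ∀ j : Fin m,
      ((Finset.univ.filter (fun ω : Ω => P j ω)).card : ℝ) = N / 2 ^ (t j) := by
    intro j
    set e := ℓ - t j with he
    have het : e + t j = ℓ := by have := (ht j).2; omega
    set T := (Finset.univ : Finset (Fin (2^ℓ) × Fin (2^ℓ))).filter
        (fun p => (p.1 : ℕ) / 2^e = (p.2 : ℕ) / 2^e) with hT
    set S := Finset.univ.filter (fun ω : Ω => P j ω) with hS
    have hmap : ∀ ω ∈ S, (h ω x, h ω (xs j)) ∈ T := by
      intro ω hω
      simp only [hS, Finset.mem_filter, Finset.mem_univ, true_and] at hω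
      simp only [hT, Finset.mem_filter, Finset.mem_univ, true_and]
      exact hω
    have hcard : S.card = ∑ p ∈ T,
        (S.filter (fun ω => (h ω x, h ω (xs j)) = p)).card :=
      Finset.card_eq_sum_card_fiberwise hmap
    have hfib : ∀ p ∈ T, S.filter (fun ω => (h ω x, h ω (xs j)) = p)
        = Finset.univ.filter (fun ω : Ω => h ω x = p.1 ∧ h ω (xs j) = p.2) := by
      intro p hp
      simp only [hT, Finset.mem_filter, Finset.mem_univ, true_and] at hp
      ext ω
      simp only [hS, Finset.filter_filter, Finset.mem_filter, Finset.mem_univ, true_and,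
        Prod.ext_iff, hP]
      constructor
      · rintro ⟨_, h1, h2⟩; exact ⟨h1, h2⟩
      · rintro ⟨h1, h2⟩
        refine ⟨?_, h1, h2⟩
        rw [h1, h2]; exact hp
    have hcardR : (S.card : ℝ) = T.card * (N / 2 ^ (2 * ℓ)) := by
      rw [hcard]
      push_cast
      rw [Finset.sum_congr rfl (fun p hp => by rw [hfib p hp])]
      · simp only [hpi x (xs j) (hx j)]
        rw [Finset.sum_const, nsmul_eq_mul]
    have hTcard : (T.card : ℝ) = 2^ℓ * 2^e := by
      rw [hT, pair_count ℓ e (by omega)]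
      push_cast; ring
    rw [hS] at hcardR
    rw [hcardR, hTcard]
    have hpow : (2:ℝ)^ℓ * 2^e * 2^(t j) = 2^(2*ℓ) := by
      rw [← pow_add, ← pow_add]; congr 1; omega
    have h2ℓ : (0:ℝ) < 2^(2*ℓ) := by positivity
    have htj : (0:ℝ) < 2^(t j) := by positivity
    field_simp
    nlinarith [hpow, hNpos]
  -- union bound
  have hsub : (Finset.univ.filter (fun ω : Ω => ∃ j : Fin m, P j ω))
      ⊆ Finset.univ.biUnion (fun j : Fin m => Finset.univ.filter (fun ω : Ω => P j ω)) := by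
    intro ω hω
    simp only [Finset.mem_filter, Finset.mem_univ, true_and] at hω
    obtain ⟨j, hj⟩ := hω
    simp only [Finset.mem_biUnion, Finset.mem_filter, Finset.mem_univ, true_and]
    exact ⟨j, hj⟩
  have hunion : ((Finset.univ.filter (fun ω : Ω => ∃ j : Fin m, P j ω)).card : ℝ)
      ≤ ∑ j : Fin m, ((Finset.univ.filter (fun ω : Ω => P j ω)).card : ℝ) := by
    have := le_trans (Finset.card_le_card hsub) (Finset.card_biUnion_le)
    exact_mod_cast this
  rw [div_le_iff₀ hNpos]
  calc ((Finset.univ.filter (fun ω : Ω => ∃ j : Fin m, P j ω)).card : ℝ)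
      ≤ ∑ j : Fin m, ((Finset.univ.filter (fun ω : Ω => P j ω)).card : ℝ) := hunion
    _ = ∑ j : Fin m, N / 2 ^ (t j) := Finset.sum_congr rfl (fun j _ => key j)
    _ = (∑ j : Fin m, (1 : ℝ) / 2 ^ (t j)) * N := by
        rw [Finset.sum_mul]
        exact Finset.sum_congr rfl (fun j _ => by ring)
end

section
/- Let U be a type, let 0 < ε < 1, let i ≥ 1 be an integer, and let ℓ ≥ ⌈log₂(1/ε)⌉ + i + 2 be an integer. Let Ω be a finite nonempty set and h : Ω → U → Fin(2^ℓ) a pairwise independent hash family, i.e., for all distinct x, y ∈ U and all a, b ∈ Fin(2^ℓ), the number of ω ∈ Ω with h(ω)(x) = a and h(ω)(y) = b equals |Ω| / 2^{2ℓ}. Set ℓ_i = ⌈log₂(1/ε)⌉ + i + 2 and define trunc(a) = ⌊a / 2^{ℓ−ℓ_i}⌋ for a ∈ Fin(2^ℓ). Let x_1, …, x_m ∈ U with m ≤ 2^{i+2}, and let x ∈ U with x ∉ {x_1, …, x_m}. Then the fraction of seeds ω ∈ Ω for which there exists some j ∈ {1,…,m} with trunc(h(ω)(x)) = trunc(h(ω)(x_j))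 is at most ε. -/
lemma fiber_card (n k q : ℕ) (hk : 0 < k) (hq : k * (q + 1) ≤ n) :
    (Finset.univ.filter fun b : Fin n => (b : ℕ) / k = q).card = k := by
  have hq' : k * q + k ≤ n := by rw [Nat.mul_succ] at hq; exact hq
  have hIco : (Finset.Ico (k * q) (k * q + k)).card = k := by simp
  have heq : (Finset.univ.filter fun b : Fin n => (b : ℕ) / k = q).card
      = (Finset.Ico (k * q) (k * q + k)).card := by
    refine Finset.card_bij' (fun b _ => (b : ℕ))
      (fun y hy => (⟨y, by simp only [Finset.mem_Ico] at hy; omega⟩ : Fin n)) ?_ ?_ ?_ ?_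
    · intro a ha
      simp only [Finset.mem_filter, Finset.mem_univ, true_and] at ha
      simp only [Finset.mem_Ico]
      have h1 : k * q ≤ (a : ℕ) := by
        rw [← ha, Nat.mul_comm]; exact Nat.div_mul_le_self _ _
      have h2 : (a : ℕ) / k < q + 1 := by omega
      have h3 := (Nat.div_lt_iff_lt_mul hk).mp h2
      rw [Nat.succ_mul, Nat.mul_comm q k] at h3
      constructor <;> omega
    · intro y hy
      simp only [Finset.mem_Ico] at hy
      simp only [Finset.mem_filter, Finset.mem_univ, true_and]
      have h1 : q ≤ y / k := (Nat.le_div_iff_mul_le hk).mpr (by rw [Nat.mul_comm q k]; omega)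
      have h2 : y / k < q + 1 := (Nat.div_lt_iff_lt_mul hk).mpr (by rw [Nat.succ_mul, Nat.mul_comm q k]; omega)
      omega
    · intro a ha; rfl
    · intro y hy; rfl
  rw [heq, hIco]

lemma pair_card (n k : ℕ) (hk : 0 < k) (hkn : k ∣ n) :
    ((Finset.univ : Finset (Fin n × Fin n)).filter
      fun p => (p.1 : ℕ) / k = (p.2 : ℕ) / k).card = n * k := by
  set S := (Finset.univ : Finset (Fin n × Fin n)).filter
      (fun p => (p.1 : ℕ) / k = (p.2 : ℕ) / k) with hS
  have hmap : ∀ p ∈ S, p.1 ∈ (Finset.univ : Finset (Fin n)) := by intros; simp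
  rw [Finset.card_eq_sum_card_fiberwise hmap]
  have key : ∀ a : Fin n, (S.filter fun p => p.1 = a).card = k := by
    intro a
    have hq : k * ((a : ℕ) / k + 1) ≤ n := by
      obtain ⟨c, rfl⟩ := hkn
      have : (a : ℕ) / k < c := Nat.div_lt_of_lt_mul (by have := a.isLt; omega)
      exact Nat.mul_le_mul_left k (by omega)
    rw [← fiber_card n k ((a : ℕ) / k) hk hq]
    refine Finset.card_bij' (fun p _ => p.2) (fun b _ => (a, b)) ?_ ?_ ?_ ?_
    · intro p hp
      simp only [hS, Finset.mem_filter, Finset.mem_univ, true_and] at hp ⊢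
      rw [← hp.2]; exact hp.1.symm
    · intro b hb
      simp only [hS, Finset.mem_filter, Finset.mem_univ, true_and] at hb ⊢
      exact ⟨hb.symm, trivial⟩
    · intro p hp
      simp only [hS, Finset.mem_filter, Finset.mem_univ, true_and] at hp
      exact Prod.ext hp.2.symm rfl
    · intro b hb; rfl
  simp [key, Finset.sum_const, Finset.card_univ]

lemma collision_card {Ω : Type} [Fintype Ω] {n k : ℕ} (hk : 0 < k) (hkn : k ∣ n)
    (f g : Ω → Fin n) (C : ℝ)
    (hpi : ∀ a b : Fin n,
      ((Finset.univ.filter fun ω => f ω = a ∧ g ω = b).card : ℝ) = C) :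
    ((Finset.univ.filter fun ω => (f ω : ℕ) / k = (g ω : ℕ) / k).card : ℝ)
      = (n * k : ℕ) * C := by
  classical
  set S := (Finset.univ : Finset (Fin n × Fin n)).filter
      (fun p => (p.1 : ℕ) / k = (p.2 : ℕ) / k) with hS
  set s := Finset.univ.filter fun ω : Ω => (f ω : ℕ) / k = (g ω : ℕ) / k with hs
  have hmap : ∀ ω ∈ s, (f ω, g ω) ∈ S := by
    intro ω hω
    simp only [hs, Finset.mem_filter, Finset.mem_univ, true_and] at hω
    simp only [hS, Finset.mem_filter, Finset.mem_univ, true_and]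
    exact hω
  have hcard := Finset.card_eq_sum_card_fiberwise hmap
  have hfib : ∀ p ∈ S, (s.filter fun ω => (f ω, g ω) = p).card
      = (Finset.univ.filter fun ω => f ω = p.1 ∧ g ω = p.2).card := by
    intro p hp
    congr 1
    ext ω
    simp only [hs, Finset.mem_filter, Finset.mem_univ, true_and, Prod.ext_iff]
    simp only [hS, Finset.mem_filter, Finset.mem_univ, true_and] at hp
    constructor
    · rintro ⟨-, h1, h2⟩; exact ⟨h1, h2⟩
    · rintro ⟨h1, h2⟩; exact ⟨by rw [h1, h2]; exact hp, h1, h2⟩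
  have : ((s.card : ℝ)) = ∑ p ∈ S, C := by
    rw [hcard]
    push_cast
    refine Finset.sum_congr rfl fun p hp => ?_
    rw [hfib p hp]
    exact hpi p.1 p.2
  rw [this, Finset.sum_const, nsmul_eq_mul, hS, pair_card n k hk hkn]


/-- False-positive-rate bound of the constant-time construction: with
`ℓ_i = ⌈log₂(1/ε)⌉ + i + 2`, a pairwise independent hash family into `ℓ`-bit
strings (`ℓ ≥ ℓ_i`), and at most `m ≤ 2^{i+2}` stored keys, a non-inserted
element's `ℓ_i`-bit truncated signature collides with some stored truncated
signature for at most an `ε` fraction of the seeds. -/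
theorem false_positive_rate_bound
    (U : Type) (ε : ℝ) (hε0 : 0 < ε) (hε1 : ε < 1)
    (i ℓ ℓi : ℕ) (hi : 1 ≤ i)
    (hℓi : ℓi = ⌈Real.logb 2 (1 / ε)⌉₊ + i + 2) (hℓ : ℓi ≤ ℓ)
    (Ω : Type) [Fintype Ω] [Nonempty Ω]
    (h : Ω → U → Fin (2 ^ ℓ))
    (hpi : ∀ x y : U, x ≠ y → ∀ a b : Fin (2 ^ ℓ),
      ((Finset.univ.filter (fun ω : Ω => h ω x = a ∧ h ω y = b)).card : ℝ)
        = (Fintype.card Ω : ℝ) / 2 ^ (2 * ℓ))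
    (m : ℕ) (hm : m ≤ 2 ^ (i + 2)) (xs : Fin m → U) (x : U)
    (hx : ∀ j : Fin m, x ≠ xs j) :
    ((Finset.univ.filter (fun ω : Ω => ∃ j : Fin m,
        (h ω x : ℕ) / 2 ^ (ℓ - ℓi) = (h ω (xs j) : ℕ) / 2 ^ (ℓ - ℓi))).card : ℝ)
      / (Fintype.card Ω : ℝ) ≤ ε := by
  classical
  set c := ⌈Real.logb 2 (1 / ε)⌉₊ with hc
  set k := 2 ^ (ℓ - ℓi) with hk
  have hΩpos : (0 : ℝ) < (Fintype.card Ω : ℝ) := by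
    exact_mod_cast Fintype.card_pos
  -- per-key collision card
  have hsingle : ∀ j : Fin m,
      ((Finset.univ.filter fun ω : Ω =>
        (h ω x : ℕ) / k = (h ω (xs j) : ℕ) / k).card : ℝ)
      = (Fintype.card Ω : ℝ) / 2 ^ ℓi := by
    intro j
    have hdvd : k ∣ 2 ^ ℓ := pow_dvd_pow 2 (Nat.sub_le ℓ ℓi)
    have := collision_card (Ω := Ω) (n := 2 ^ ℓ) (k := k)
      (by positivity) hdvd (fun ω => h ω x) (fun ω => h ω (xs j))
      ((Fintype.card Ω : ℝ) / 2 ^ (2 * ℓ))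
      (fun a b => hpi x (xs j) (hx j) a b)
    rw [this]
    have hsplit : 2 * ℓ = ℓ + (ℓ - ℓi) + ℓi := by omega
    push_cast
    rw [hsplit, pow_add, pow_add, hk]
    push_cast
    have h1 : (0:ℝ) < (2:ℝ) ^ ℓ := by positivity
    have h2 : (0:ℝ) < (2:ℝ) ^ (ℓ - ℓi) := by positivity
    have h3 : (0:ℝ) < (2:ℝ) ^ ℓi := by positivity
    field_simp
  -- union bound
  set E := Finset.univ.filter (fun ω : Ω => ∃ j : Fin m,
      (h ω x : ℕ) / k = (h ω (xs j) : ℕ) / k) with hE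
  have hsub : E ⊆ Finset.univ.biUnion (fun j : Fin m =>
      Finset.univ.filter fun ω : Ω => (h ω x : ℕ) / k = (h ω (xs j) : ℕ) / k) := by
    intro ω hω
    simp only [hE, Finset.mem_filter, Finset.mem_univ, true_and] at hω
    simp only [Finset.mem_biUnion, Finset.mem_filter, Finset.mem_univ, true_and]
    obtain ⟨j, hj⟩ := hω
    exact ⟨j, hj⟩
  have hcard : (E.card : ℝ) ≤ m * ((Fintype.card Ω : ℝ) / 2 ^ ℓi) := by
    calc (E.card : ℝ) ≤ ((Finset.univ.biUnion (fun j : Fin m =>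
            Finset.univ.filter fun ω : Ω =>
              (h ω x : ℕ) / k = (h ω (xs j) : ℕ) / k)).card : ℝ) := by
          exact_mod_cast Finset.card_le_card hsub
      _ ≤ ∑ j : Fin m, ((Finset.univ.filter fun ω : Ω =>
            (h ω x : ℕ) / k = (h ω (xs j) : ℕ) / k).card : ℝ) := by
          exact_mod_cast Finset.card_biUnion_le
      _ = ∑ j : Fin m, (Fintype.card Ω : ℝ) / 2 ^ ℓi := by
          exact Finset.sum_congr rfl fun j _ => hsingle j
      _ = m * ((Fintype.card Ω : ℝ) / 2 ^ ℓi) := by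
          rw [Finset.sum_const, Finset.card_univ, Fintype.card_fin, nsmul_eq_mul]
  -- conclude
  have hstep : (E.card : ℝ) / (Fintype.card Ω : ℝ) ≤ (m : ℝ) / 2 ^ ℓi := by
    rw [div_le_iff₀ hΩpos]
    calc (E.card : ℝ) ≤ m * ((Fintype.card Ω : ℝ) / 2 ^ ℓi) := hcard
      _ = (m : ℝ) / 2 ^ ℓi * (Fintype.card Ω : ℝ) := by ring
  refine hstep.trans ?_
  -- m / 2^ℓi ≤ 2^(i+2)/2^ℓi = 1/2^c ≤ ε
  have hεle : (1 : ℝ) / 2 ^ c ≤ ε := by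
    have hlogb : Real.logb 2 (1 / ε) ≤ (c : ℝ) := Nat.le_ceil _
    have h2c : 1 / ε ≤ (2 : ℝ) ^ c := by
      calc 1 / ε = (2 : ℝ) ^ Real.logb 2 (1 / ε) :=
            (Real.rpow_logb two_pos (by norm_num) (by positivity)).symm
        _ ≤ (2 : ℝ) ^ (c : ℝ) :=
            (Real.rpow_le_rpow_left_iff one_lt_two).mpr hlogb
        _ = (2 : ℝ) ^ c := Real.rpow_natCast 2 c
    rw [div_le_iff₀ (by positivity)]
    rw [div_le_iff₀ hε0] at h2c
    linarith
  calc (m : ℝ) / 2 ^ ℓi ≤ (2 ^ (i + 2) : ℝ) / 2 ^ ℓi := by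
        apply div_le_div_of_nonneg_right ?_ (by positivity)
        · exact_mod_cast hm
    _ = 1 / 2 ^ c := by
        rw [hℓi, hc]
        rw [show c + i + 2 = c + (i + 2) by ring, pow_add]
        field_simp
        rw [← hc, pow_add, pow_add]
        ring
    _ ≤ ε := hεle
end
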